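/- Lemma 2.4 (derivative of the algebraic area of the dual face, vertex-star form). Let (m, p_0, p) be a spherical vertex star with edge weights c_j and vertex weight d_0, and let f_0 ∈ ℝ and f : ZMod m → ℝ. For ε ∈ ℝ and j ∈ ZMod m, let n_j(ε) ∈ ℝ³ be the unique solution of the linear system ⟨p_0, n_j(ε)⟩ = 1 + ε·f_0, ⟨p_j, n_j(ε)⟩ = 1 + ε·f_j, ⟨p_{j+1}, n_j(ε)⟩ = 1 + ε·f_{j+1} (it exists and is unique since p_0, p_j, p_{j+1} are linearly independent). Define the algebraic area A(ε) := (1/2)·∑_{j∈ZMod m} det(p_0, n_{j−1}(ε), n_j(ε)). Then A is differentiable at ε = 0 and A′(0) = 2·d_0·f_0 + ∑_{j∈ZMod m} c_j·(f_j − f_0). In particular, if ∑_j c_j·(f_j − f_0) = −2·d_0·f_0 (i.e. f is a (−2)-eigenfunction of the discrete spherical Laplacian at the central vertex), then A′(0) = 0. -/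

import Mathlib

/-!
The dual vertices `n j ε` depend affinely on `ε`, so the area is a quadratic polynomial in `ε`
whose derivative at `0` is `½ ∑ⱼ (det(p₀, Vⱼ₋₁, Nⱼ) + det(p₀, Nⱼ₋₁, Vⱼ))`, where `Nⱼ = n j 0`
and `Vⱼ = n j 1 − n j 0`. Regrouped by edges, this is a telescoping sum plus
`½ ∑ⱼ det(p₀, Vⱼ₋₁ + Vⱼ, Nⱼ − Nⱼ₋₁)`. The dual edge `Nⱼ − Nⱼ₋₁` is orthogonal to `p₀` and `pⱼ`,
so the `j`-th term is `(fⱼ − ⟨p₀,pⱼ⟩f₀) · det(p₀, pⱼ, Nⱼ − Nⱼ₋₁) / (1 − ⟨p₀,pⱼ⟩²)`. Computing the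
dual vertices and using the half-angle formula
`tan ((A + B − C) / 2) = (1 + ⟨a,b⟩ − ⟨a,c⟩ − ⟨b,c⟩) / det(a,b,c)` for a spherical triangle with
angles `A, B, C` at `a, b, c` identifies the quotient with `cⱼ`. Finally
`1 − ⟨p₀,pⱼ⟩ = 2 sin²(λⱼ/2)` turns `∑ cⱼ (fⱼ − ⟨p₀,pⱼ⟩f₀)` into `2d₀f₀ + ∑ cⱼ (fⱼ − f₀)`.
-/

noncomputable section

/-- Standard inner product on `ℝ³`. -/
def dot3 (x y : Fin 3 → ℝ) : ℝ := x 0 * y 0 + x 1 * y 1 + x 2 * y 2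

/-- Euclidean norm on `ℝ³`. -/
def norm3 (x : Fin 3 → ℝ) : ℝ := Real.sqrt (dot3 x x)

/-- Cross product on `ℝ³`. -/
def cross3 (x y : Fin 3 → ℝ) : Fin 3 → ℝ :=
  ![x 1 * y 2 - x 2 * y 1, x 2 * y 0 - x 0 * y 2, x 0 * y 1 - x 1 * y 0]

/-- Determinant of three vectors in `ℝ³`. -/
def det3 (x y z : Fin 3 → ℝ) : ℝ := dot3 (cross3 x y) z

/-- Spherical angle at `a` between `b` and `c` (all unit vectors). -/
def sphAngle (a b c : Fin 3 → ℝ) : ℝ :=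
  Real.arccos (dot3 (b - dot3 a b • a) (c - dot3 a c • a) /
    (norm3 (b - dot3 a b • a) * norm3 (c - dot3 a c • a)))

/-- Edge weight `c_j` of the edge `(p₀, p_j)` of a spherical vertex star. -/
def sphStarWeight (m : ℕ) (p0 : Fin 3 → ℝ) (p : ZMod m → Fin 3 → ℝ) (j : ZMod m) : ℝ :=
  (Real.tan ((sphAngle p0 (p j) (p (j+1)) + sphAngle (p j) (p (j+1)) p0
      - sphAngle (p (j+1)) p0 (p j)) / 2)
   + Real.tan ((sphAngle p0 (p (j-1)) (p j) + sphAngle (p j) p0 (p (j-1))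
      - sphAngle (p (j-1)) (p j) p0) / 2))
  / (2 * Real.cos (Real.arccos (dot3 p0 (p j)) / 2) ^ 2)

/-- Vertex weight `d₀` of a spherical vertex star. -/
def sphStarVertexWeight (m : ℕ) [NeZero m] (p0 : Fin 3 → ℝ) (p : ZMod m → Fin 3 → ℝ) : ℝ :=
  ∑ j : ZMod m, sphStarWeight m p0 p j * Real.sin (Real.arccos (dot3 p0 (p j)) / 2) ^ 2

open Real

lemma det3_eq (x y z : Fin 3 → ℝ) : det3 x y z =
    (x 1 * y 2 - x 2 * y 1) * z 0 + (x 2 * y 0 - x 0 * y 2) * z 1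
      + (x 0 * y 1 - x 1 * y 0) * z 2 :=
  rfl

lemma det3_rotate (x y z : Fin 3 → ℝ) : det3 x y z = det3 y z x := by
  simp only [det3_eq]; ring

lemma det3_swap (x y z : Fin 3 → ℝ) : det3 x z y = -det3 x y z := by
  simp only [det3_eq]; ring

lemma det3_sub_right (a x y z : Fin 3 → ℝ) : det3 a x (y - z) = det3 a x y - det3 a x z := by
  simp only [det3_eq, Pi.sub_apply]; ring

lemma dot3_comm (x y : Fin 3 → ℝ) : dot3 x y = dot3 y x := by
  simp only [dot3]; ring

lemma dot3_add_right (a x y : Fin 3 → ℝ) : dot3 a (x + y) = dot3 a x + dot3 a y := by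
  simp only [dot3, Pi.add_apply]; ring

lemma dot3_sub_right (a x y : Fin 3 → ℝ) : dot3 a (x - y) = dot3 a x - dot3 a y := by
  simp only [dot3, Pi.sub_apply]; ring

lemma dot3_smul_right (a x : Fin 3 → ℝ) (t : ℝ) : dot3 a (t • x) = t * dot3 a x := by
  simp only [dot3, Pi.smul_apply, smul_eq_mul]; ring

lemma dot3_self_nonneg (x : Fin 3 → ℝ) : 0 ≤ dot3 x x := by
  simp only [dot3, ← sq]; positivity

lemma dot3_self_eq_one {x : Fin 3 → ℝ} (h : norm3 x = 1) : dot3 x x = 1 :=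
  sqrt_eq_one.mp h

lemma det3_sq {a b c : Fin 3 → ℝ} (ha : dot3 a a = 1) (hb : dot3 b b = 1) (hc : dot3 c c = 1) :
    det3 a b c ^ 2 = 1 - dot3 a b ^ 2 - dot3 a c ^ 2 - dot3 b c ^ 2
      + 2 * dot3 a b * dot3 a c * dot3 b c := by
  linear_combination (norm := skip) (dot3 b b * dot3 c c - dot3 b c ^ 2) * ha
    + (dot3 c c - dot3 a c ^ 2) * hb + (1 - dot3 a b ^ 2) * hc
  simp only [det3_eq, dot3]; ring

lemma dot3_sub_smul {a : Fin 3 → ℝ} (ha : dot3 a a = 1) (b c : Fin 3 → ℝ) :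
    dot3 (b - dot3 a b • a) (c - dot3 a c • a) = dot3 b c - dot3 a b * dot3 a c := by
  linear_combination (norm := skip) dot3 a b * dot3 a c * ha
  simp only [dot3, Pi.sub_apply, Pi.smul_apply, smul_eq_mul]; ring

lemma one_sub_sq_dot3_pos {a b c : Fin 3 → ℝ} (ha : dot3 a a = 1) (hb : dot3 b b = 1)
    (hc : dot3 c c = 1) (hD : det3 a b c ≠ 0) : 0 < 1 - dot3 a b ^ 2 := by
  have hb' : 0 ≤ 1 - dot3 a b ^ 2 := by
    simpa [dot3_sub_smul ha, hb, sq] using dot3_self_nonneg (b - dot3 a b • a)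
  have hc' : 0 ≤ 1 - dot3 a c ^ 2 := by
    simpa [dot3_sub_smul ha, hc, sq] using dot3_self_nonneg (c - dot3 a c • a)
  have hprod : (1 - dot3 a b ^ 2) * (1 - dot3 a c ^ 2)
      = det3 a b c ^ 2 + (dot3 b c - dot3 a b * dot3 a c) ^ 2 := by
    linear_combination -det3_sq ha hb hc
  refine hb'.lt_of_ne fun h => ?_
  rw [← h, zero_mul] at hprod
  linarith [sq_nonneg (dot3 b c - dot3 a b * dot3 a c), (by positivity : 0 < det3 a b c ^ 2)]

lemma abs_dot3_lt_one {a b c : Fin 3 → ℝ} (ha : dot3 a a = 1) (hb : dot3 b b = 1)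
    (hc : dot3 c c = 1) (hD : det3 a b c ≠ 0) : |dot3 a b| < 1 :=
  (sq_lt_one_iff_abs_lt_one _).mp (by linarith [one_sub_sq_dot3_pos ha hb hc hD])

lemma eq_of_dot3_eq {a b c x y : Fin 3 → ℝ} (hD : det3 a b c ≠ 0) (ha : dot3 a x = dot3 a y)
    (hb : dot3 b x = dot3 b y) (hc : dot3 c x = dot3 c y) : x = y := by
  simp only [dot3] at ha hb hc
  have h0 : det3 a b c * x 0 = det3 a b c * y 0 := by
    rw [det3_eq]
    linear_combination (b 1 * c 2 - b 2 * c 1) * ha + (c 1 * a 2 - c 2 * a 1) * hb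
      + (a 1 * b 2 - a 2 * b 1) * hc
  have h1 : det3 a b c * x 1 = det3 a b c * y 1 := by
    rw [det3_eq]
    linear_combination (b 2 * c 0 - b 0 * c 2) * ha + (c 2 * a 0 - c 0 * a 2) * hb
      + (a 2 * b 0 - a 0 * b 2) * hc
  have h2 : det3 a b c * x 2 = det3 a b c * y 2 := by
    rw [det3_eq]
    linear_combination (b 0 * c 1 - b 1 * c 0) * ha + (c 0 * a 1 - c 1 * a 0) * hb
      + (a 0 * b 1 - a 1 * b 0) * hc
  funext i
  fin_cases i <;> exact mul_left_cancel₀ hD ‹_›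

lemma eq_add_smul_of_dot3_affine {a b c : Fin 3 → ℝ} (hD : det3 a b c ≠ 0)
    {n : ℝ → Fin 3 → ℝ} {sa sb sc ta tb tc : ℝ} (ha : ∀ ε, dot3 a (n ε) = sa + ε * ta)
    (hb : ∀ ε, dot3 b (n ε) = sb + ε * tb) (hc : ∀ ε, dot3 c (n ε) = sc + ε * tc) (ε : ℝ) :
    n ε = n 0 + ε • (n 1 - n 0) := by
  refine eq_of_dot3_eq hD ?_ ?_ ?_ <;>
  · simp only [dot3_add_right, dot3_smul_right, dot3_sub_right, ha, hb, hc]; ring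

lemma det3_mul_det3_of_dot3_eq_one {a x y N : Fin 3 → ℝ} (ha : dot3 a a = 1) (hx : dot3 x x = 1)
    (hNa : dot3 a N = 1) (hNx : dot3 x N = 1) (hNy : dot3 y N = 1) :
    det3 a x y * det3 a x N = (1 - dot3 a x) * (1 + dot3 a x - dot3 a y - dot3 x y) := by
  -- Pair `det3 a x y • (a × x) = ⟨a × x, x × y⟩ • a + ⟨a × x, y × a⟩ • x + ‖a × x‖² • y` with `N`.
  linear_combination (norm := skip)
    (dot3 a x * dot3 x y - dot3 a y * dot3 x x) * hNa
      + (dot3 a y * dot3 a x - dot3 a a * dot3 x y) * hNx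
      + (dot3 a a * dot3 x x - dot3 a x ^ 2) * hNy + (1 - dot3 a y) * hx
      + (dot3 x x - dot3 x y) * ha
  simp only [det3_eq, dot3]; ring

lemma one_sub_sq_mul_det3_of_perp {a c z : Fin 3 → ℝ} (ha : dot3 a a = 1) (hc : dot3 c c = 1)
    (hza : dot3 a z = 0) (hzc : dot3 c z = 0) (W : Fin 3 → ℝ) :
    (1 - dot3 a c ^ 2) * det3 a W z = det3 a c z * (dot3 c W - dot3 a c * dot3 a W) := by
  -- `z` is a multiple of `a × c`, and `det3 a W (a × c) = ⟨c, W⟩ - ⟨a, c⟩⟨a, W⟩`.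
  linear_combination (norm := skip)
    det3 a c W * dot3 a c * hza - det3 a c W * dot3 a a * hzc
      + (det3 a c z * dot3 c W - dot3 c c * det3 a W z) * ha - det3 a W z * hc
  simp only [det3_eq, dot3]; ring

lemma cos_sin_arccos_div {q D r : ℝ} (hr : 0 < r) (hD : 0 ≤ D) (h : q ^ 2 + D ^ 2 = r ^ 2) :
    cos (arccos (q / r)) * r = q ∧ sin (arccos (q / r)) * r = D := by
  obtain ⟨hlo, hhi⟩ := abs_le_of_sq_le_sq' (by nlinarith : q ^ 2 ≤ r ^ 2) hr.le
  have hsq : 1 - (q / r) ^ 2 = (D / r) ^ 2 := by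
    field_simp; linear_combination -h
  constructor
  · rw [cos_arccos (by rw [le_div_iff₀ hr]; linarith) (by rw [div_le_one hr]; linarith)]
    field_simp
  · rw [sin_arccos, hsq, sqrt_sq (by positivity)]
    field_simp

lemma tan_half_eq_sin_div_one_add_cos (x : ℝ) : tan (x / 2) = sin x / (1 + cos x) := by
  obtain ⟨y, rfl⟩ : ∃ y, x = 2 * y := ⟨x / 2, by ring⟩
  rw [show 2 * y / 2 = y by ring, tan_eq_sin_div_cos, sin_two_mul, cos_two_mul]
  -- If `cos y = 0`, both sides are divisions by zero.
  by_cases hy : cos y = 0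
  · simp [hy]
  · field_simp; ring

lemma tan_half_sub_of_cos_sin {A B C u v w D sx sy sz : ℝ}
    (hsx : sx ^ 2 = 1 - u ^ 2) (hsy : sy ^ 2 = 1 - v ^ 2) (hsz : sz ^ 2 = 1 - w ^ 2)
    (hD : D ≠ 0) (hG : D ^ 2 = 1 - u ^ 2 - v ^ 2 - w ^ 2 + 2 * u * v * w)
    (hcA : cos A * (sx * sy) = w - u * v) (hsA : sin A * (sx * sy) = D)
    (hcB : cos B * (sz * sx) = v - w * u) (hsB : sin B * (sz * sx) = D)
    (hcC : cos C * (sy * sz) = u - v * w) (hsC : sin C * (sy * sz) = D) :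
    tan ((A + B - C) / 2) = (1 + u - v - w) / D := by
  have hxy : sx * sy ≠ 0 := by rintro h; rw [h, mul_zero] at hsA; exact hD hsA.symm
  have hzx : sz * sx ≠ 0 := by rintro h; rw [h, mul_zero] at hsB; exact hD hsB.symm
  have hyz : sy * sz ≠ 0 := by rintro h; rw [h, mul_zero] at hsC; exact hD hsC.symm
  set P := sx * sy * (sz * sx) * (sy * sz)
  have hP : P = (1 - u ^ 2) * (1 - v ^ 2) * (1 - w ^ 2) := by
    rw [← hsx, ← hsy, ← hsz]; ring
  have hP0 : P ≠ 0 := mul_ne_zero (mul_ne_zero hxy hzx) hyz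
  have hk : (1 - u) * (1 + v) * (1 + w) ≠ 0 := fun h => hP0 <| by
    rw [hP]; linear_combination (1 + u) * (1 - v) * (1 - w) * h
  have hcos : (1 + cos (A + B - C)) * P = (1 - u) * (1 + v) * (1 + w) * D ^ 2 := by
    have e : (1 + cos (A + B - C)) * P = P + (cos A * (sx * sy) * (cos B * (sz * sx))
        - sin A * (sx * sy) * (sin B * (sz * sx))) * (cos C * (sy * sz))
        + (sin A * (sx * sy) * (cos B * (sz * sx)) + cos A * (sx * sy) * (sin B * (sz * sx)))
          * (sin C * (sy * sz)) := by
      rw [cos_sub, cos_add, sin_add]; ring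
    rw [e, hcA, hsA, hcB, hsB, hcC, hsC, hP]
    linear_combination (w - u * v + (v - w * u) - (u - v * w) - (1 - u) * (1 + v) * (1 + w)) * hG
  have hsin : sin (A + B - C) * P = (1 - u) * (1 + v) * (1 + w) * D * (1 + u - v - w) := by
    have e : sin (A + B - C) * P = (sin A * (sx * sy) * (cos B * (sz * sx))
        + cos A * (sx * sy) * (sin B * (sz * sx))) * (cos C * (sy * sz))
        - (cos A * (sx * sy) * (cos B * (sz * sx)) - sin A * (sx * sy) * (sin B * (sz * sx)))
          * (sin C * (sy * sz)) := by
      rw [sin_sub, cos_add, sin_add]; ring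
    rw [e, hcA, hsA, hcB, hsB, hcC, hsC]
    linear_combination D * hG
  have h1 : 1 + cos (A + B - C) ≠ 0 :=
    left_ne_zero_of_mul (hcos ▸ mul_ne_zero hk (pow_ne_zero 2 hD))
  rw [tan_half_eq_sin_div_one_add_cos, div_eq_div_iff h1 hD]
  apply mul_right_cancel₀ hP0
  linear_combination D * hsin - (1 + u - v - w) * hcos

lemma two_mul_cos_sq_half_arccos {x : ℝ} (h₁ : -1 ≤ x) (h₂ : x ≤ 1) :
    2 * cos (arccos x / 2) ^ 2 = 1 + x := by
  rw [cos_sq, show 2 * (arccos x / 2) = arccos x by ring, cos_arccos h₁ h₂]; ring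

lemma two_mul_sin_sq_half_arccos {x : ℝ} (h₁ : -1 ≤ x) (h₂ : x ≤ 1) :
    2 * sin (arccos x / 2) ^ 2 = 1 - x := by
  rw [sin_sq_eq_half_sub, show 2 * (arccos x / 2) = arccos x by ring, cos_arccos h₁ h₂]; ring

lemma cos_sin_sphAngle {a b c : Fin 3 → ℝ} (ha : dot3 a a = 1) (hb : dot3 b b = 1)
    (hc : dot3 c c = 1) (hD : 0 < det3 a b c) :
    cos (sphAngle a b c) * (√(1 - dot3 a b ^ 2) * √(1 - dot3 a c ^ 2))
        = dot3 b c - dot3 a b * dot3 a c ∧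
      sin (sphAngle a b c) * (√(1 - dot3 a b ^ 2) * √(1 - dot3 a c ^ 2)) = det3 a b c := by
  have hab := one_sub_sq_dot3_pos ha hb hc hD.ne'
  have hac := one_sub_sq_dot3_pos ha hc hb (by rw [det3_swap]; exact neg_ne_zero.mpr hD.ne')
  have hnorm : ∀ x, dot3 x x = 1 → norm3 (x - dot3 a x • a) = √(1 - dot3 a x ^ 2) := by
    intro x hx
    rw [norm3, dot3_sub_smul ha, hx, sq]
  unfold sphAngle
  rw [dot3_sub_smul ha, hnorm b hb, hnorm c hc]
  refine cos_sin_arccos_div (by positivity) hD.le ?_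
  rw [mul_pow, sq_sqrt hab.le, sq_sqrt hac.le]
  linear_combination det3_sq ha hb hc

lemma tan_half_sphAngle_add_sub {a b c : Fin 3 → ℝ} (ha : dot3 a a = 1) (hb : dot3 b b = 1)
    (hc : dot3 c c = 1) (hD : 0 < det3 a b c) :
    tan ((sphAngle a b c + sphAngle b c a - sphAngle c a b) / 2)
      = (1 + dot3 a b - dot3 a c - dot3 b c) / det3 a b c := by
  obtain ⟨hcA, hsA⟩ := cos_sin_sphAngle ha hb hc hD
  obtain ⟨hcB, hsB⟩ := cos_sin_sphAngle hb hc ha (det3_rotate a b c ▸ hD)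
  obtain ⟨hcC, hsC⟩ := cos_sin_sphAngle hc ha hb (det3_rotate b c a ▸ det3_rotate a b c ▸ hD)
  rw [← det3_rotate] at hsB
  rw [← det3_rotate, ← det3_rotate] at hsC
  simp only [dot3_comm b a, dot3_comm c a, dot3_comm c b] at hcB hsB hcC hsC
  have hab := one_sub_sq_dot3_pos ha hb hc hD.ne'
  have hac := one_sub_sq_dot3_pos ha hc hb (by rw [det3_swap]; exact neg_ne_zero.mpr hD.ne')
  have hbc := one_sub_sq_dot3_pos hb hc ha (by rw [← det3_rotate]; exact hD.ne')
  exact tan_half_sub_of_cos_sin (sq_sqrt hab.le) (sq_sqrt hac.le) (sq_sqrt hbc.le) hD.ne'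
    (det3_sq ha hb hc) hcA hsA hcB hsB hcC hsC

lemma hasDerivAt_det3_of_affine (a : Fin 3 → ℝ) {x y : ℝ → Fin 3 → ℝ} {v w : Fin 3 → ℝ}
    (hx : ∀ t, x t = x 0 + t • v) (hy : ∀ t, y t = y 0 + t • w) :
    HasDerivAt (fun t => det3 a (x t) (y t)) (det3 a v (y 0) + det3 a (x 0) w) 0 := by
  have h : (fun t => det3 a (x t) (y t)) = fun t =>
      det3 a (x 0) (y 0) + t * (det3 a v (y 0) + det3 a (x 0) w) + t ^ 2 * det3 a v w := by
    funext t
    rw [hx t, hy t]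
    simp only [det3_eq, Pi.add_apply, Pi.smul_apply, smul_eq_mul]; ring
  rw [h]
  exact ((((hasDerivAt_id' 0).mul_const _).const_add _).add
    ((hasDerivAt_pow 2 0).mul_const _)).congr_deriv (by simp)

lemma Fintype.sum_shift_sub_eq_zero {G M : Type*} [AddGroup G] [Fintype G] [AddCommGroup M]
    (g : G → M) (k : G) : ∑ j, (g (j - k) - g j) = 0 := by
  rw [Finset.sum_sub_distrib, sub_eq_zero]
  exact (Equiv.subRight k).sum_comp g

section VertexStar

variable {m : ℕ} {p0 : Fin 3 → ℝ} {p : ZMod m → Fin 3 → ℝ}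

lemma one_add_dot3_mul_sphStarWeight (hp0 : dot3 p0 p0 = 1) (hp : ∀ j, dot3 (p j) (p j) = 1)
    (hdet : ∀ j, 0 < det3 p0 (p j) (p (j + 1))) (j : ZMod m) :
    (1 + dot3 p0 (p j)) * sphStarWeight m p0 p j
      = (1 + dot3 p0 (p j) - dot3 p0 (p (j + 1)) - dot3 (p j) (p (j + 1)))
          / det3 p0 (p j) (p (j + 1))
        + (1 + dot3 p0 (p j) - dot3 p0 (p (j - 1)) - dot3 (p j) (p (j - 1)))
          / det3 p0 (p (j - 1)) (p j) := by
  have hprev : 0 < det3 (p j) p0 (p (j - 1)) := by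
    have h := hdet (j - 1)
    rwa [sub_add_cancel, det3_rotate, det3_rotate] at h
  obtain ⟨hx₁, hx₂⟩ := abs_lt.mp (abs_dot3_lt_one hp0 (hp j) (hp (j + 1)) (hdet j).ne')
  unfold sphStarWeight
  rw [tan_half_sphAngle_add_sub hp0 (hp j) (hp (j + 1)) (hdet j),
    add_comm (sphAngle p0 (p (j - 1)) (p j)),
    tan_half_sphAngle_add_sub (hp j) hp0 (hp (j - 1)) hprev,
    two_mul_cos_sq_half_arccos hx₁.le hx₂.le, mul_div_cancel₀ _ (by linarith),
    dot3_comm (p j) p0, det3_rotate (p j) p0 (p (j - 1))]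
  ring

lemma one_sub_sq_mul_sphStarWeight (hp0 : dot3 p0 p0 = 1) (hp : ∀ j, dot3 (p j) (p j) = 1)
    (hdet : ∀ j, 0 < det3 p0 (p j) (p (j + 1))) {N : ZMod m → Fin 3 → ℝ}
    (hN : ∀ j, dot3 p0 (N j) = 1 ∧ dot3 (p j) (N j) = 1 ∧ dot3 (p (j + 1)) (N j) = 1)
    (j : ZMod m) :
    (1 - dot3 p0 (p j) ^ 2) * sphStarWeight m p0 p j
      = det3 p0 (p j) (N j - N (j - 1)) := by
  obtain ⟨h0, h1, h2⟩ := hN j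
  obtain ⟨h0', h1', h2'⟩ := hN (j - 1)
  rw [sub_add_cancel] at h2'
  have hnext := det3_mul_det3_of_dot3_eq_one hp0 (hp j) h0 h1 h2
  have hprev := det3_mul_det3_of_dot3_eq_one hp0 (hp j) h0' h2' h1'
  have hD' : 0 < det3 p0 (p (j - 1)) (p j) := by simpa using hdet (j - 1)
  rw [det3_swap p0 (p (j - 1)) (p j), neg_mul, ← mul_neg] at hprev
  have k1 := eq_div_of_mul_eq (hdet j).ne' ((mul_comm _ _).trans hnext)
  have k2 := eq_div_of_mul_eq hD'.ne' ((mul_comm _ _).trans hprev)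
  rw [det3_sub_right]
  linear_combination (1 - dot3 p0 (p j)) * one_add_dot3_mul_sphStarWeight hp0 hp hdet j - k1 - k2

lemma det3_add_sub_eq_two_mul_sphStarWeight (hp0 : dot3 p0 p0 = 1) (hp : ∀ j, dot3 (p j) (p j) = 1)
    (hdet : ∀ j, 0 < det3 p0 (p j) (p (j + 1))) {N V : ZMod m → Fin 3 → ℝ} {f0 : ℝ}
    {f : ZMod m → ℝ}
    (hN : ∀ j, dot3 p0 (N j) = 1 ∧ dot3 (p j) (N j) = 1 ∧ dot3 (p (j + 1)) (N j) = 1)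
    (hV : ∀ j, dot3 p0 (V j) = f0 ∧ dot3 (p j) (V j) = f j ∧ dot3 (p (j + 1)) (V j) = f (j + 1))
    (j : ZMod m) :
    det3 p0 (V (j - 1) + V j) (N j - N (j - 1))
      = 2 * sphStarWeight m p0 p j * (f j - dot3 p0 (p j) * f0) := by
  obtain ⟨hN0, hN1, -⟩ := hN j
  obtain ⟨hN0', -, hN2'⟩ := hN (j - 1)
  obtain ⟨hV0, hV1, -⟩ := hV j
  obtain ⟨hV0', -, hV2'⟩ := hV (j - 1)
  rw [sub_add_cancel] at hN2' hV2'
  have hz0 : dot3 p0 (N j - N (j - 1)) = 0 := by rw [dot3_sub_right, hN0, hN0', sub_self]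
  have hz1 : dot3 (p j) (N j - N (j - 1)) = 0 := by rw [dot3_sub_right, hN1, hN2', sub_self]
  have h := one_sub_sq_mul_det3_of_perp hp0 (hp j) hz0 hz1 (V (j - 1) + V j)
  have hx := one_sub_sq_dot3_pos hp0 (hp j) (hp (j + 1)) (hdet j).ne'
  rw [← one_sub_sq_mul_sphStarWeight hp0 hp hdet hN j, dot3_add_right,
    dot3_add_right, hV0, hV0', hV1, hV2'] at h
  apply mul_left_cancel₀ hx.ne'
  linear_combination h

lemma half_sum_det3_dual_eq [NeZero m] (hp0 : dot3 p0 p0 = 1) (hp : ∀ j, dot3 (p j) (p j) = 1)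
    (hdet : ∀ j, 0 < det3 p0 (p j) (p (j + 1))) {N V : ZMod m → Fin 3 → ℝ} {f0 : ℝ}
    {f : ZMod m → ℝ}
    (hN : ∀ j, dot3 p0 (N j) = 1 ∧ dot3 (p j) (N j) = 1 ∧ dot3 (p (j + 1)) (N j) = 1)
    (hV : ∀ j, dot3 p0 (V j) = f0 ∧ dot3 (p j) (V j) = f j ∧ dot3 (p (j + 1)) (V j) = f (j + 1)) :
    (1 / 2) * ∑ j, (det3 p0 (V (j - 1)) (N j) + det3 p0 (N (j - 1)) (V j))
      = 2 * sphStarVertexWeight m p0 p * f0 + ∑ j, sphStarWeight m p0 p j * (f j - f0) := by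
  have hregroup : ∀ j, det3 p0 (V (j - 1)) (N j) + det3 p0 (N (j - 1)) (V j)
      = (det3 p0 (V (j - 1)) (N (j - 1)) - det3 p0 (V j) (N j))
        + det3 p0 (V (j - 1) + V j) (N j - N (j - 1)) := by
    intro j; simp only [det3_eq, Pi.add_apply, Pi.sub_apply]; ring
  have hsin : ∀ j, 2 * sin (arccos (dot3 p0 (p j)) / 2) ^ 2 = 1 - dot3 p0 (p j) := by
    intro j
    obtain ⟨hx₁, hx₂⟩ := abs_lt.mp (abs_dot3_lt_one hp0 (hp j) (hp (j + 1)) (hdet j).ne')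
    exact two_mul_sin_sq_half_arccos hx₁.le hx₂.le
  have htelescope := Fintype.sum_shift_sub_eq_zero (fun j => det3 p0 (V j) (N j)) 1
  rw [Finset.sum_congr rfl fun j _ => hregroup j, Finset.sum_add_distrib, htelescope, zero_add,
    Finset.sum_congr rfl fun j _ => det3_add_sub_eq_two_mul_sphStarWeight hp0 hp hdet hN hV j,
    sphStarVertexWeight]
  simp only [Finset.mul_sum, Finset.sum_mul]
  rw [← Finset.sum_add_distrib]
  refine Finset.sum_congr rfl fun j _ => ?_
  linear_combination -(sphStarWeight m p0 p j * f0) * hsin j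

end VertexStar

theorem sph_dual_area_derivative_general
    (m : ℕ) [NeZero m]
    (p0 : Fin 3 → ℝ) (p : ZMod m → Fin 3 → ℝ)
    (hp0 : norm3 p0 = 1) (hp : ∀ j, norm3 (p j) = 1)
    (hdet : ∀ j : ZMod m, 0 < det3 p0 (p j) (p (j+1)))
    (f0 : ℝ) (f : ZMod m → ℝ)
    (n : ZMod m → ℝ → Fin 3 → ℝ)
    (hn0 : ∀ (j : ZMod m) (ε : ℝ), dot3 p0 (n j ε) = 1 + ε * f0)
    (hn1 : ∀ (j : ZMod m) (ε : ℝ), dot3 (p j) (n j ε) = 1 + ε * f j)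
    (hn2 : ∀ (j : ZMod m) (ε : ℝ), dot3 (p (j+1)) (n j ε) = 1 + ε * f (j+1)) :
    HasDerivAt (fun ε : ℝ => (1 / 2) * ∑ j : ZMod m, det3 p0 (n (j-1) ε) (n j ε))
      (2 * sphStarVertexWeight m p0 p * f0
        + ∑ j : ZMod m, sphStarWeight m p0 p j * (f j - f0)) 0
    ∧ ((∑ j : ZMod m, sphStarWeight m p0 p j * (f j - f0)
          = -2 * sphStarVertexWeight m p0 p * f0) →
        HasDerivAt (fun ε : ℝ => (1 / 2) * ∑ j : ZMod m, det3 p0 (n (j-1) ε) (n j ε))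
          0 0) := by
  have hline : ∀ j ε, n j ε = n j 0 + ε • (n j 1 - n j 0) := fun j =>
    eq_add_smul_of_dot3_affine (hdet j).ne' (hn0 j) (hn1 j) (hn2 j)
  have hvalue := half_sum_det3_dual_eq (dot3_self_eq_one hp0) (fun j => dot3_self_eq_one (hp j))
    hdet (N := fun j => n j 0) (V := fun j => n j 1 - n j 0) (f0 := f0) (f := f)
    (fun j => ⟨by simpa using hn0 j 0, by simpa using hn1 j 0, by simpa using hn2 j 0⟩)
    (fun j => ⟨by rw [dot3_sub_right, hn0, hn0]; ring, by rw [dot3_sub_right, hn1, hn1]; ring,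
      by rw [dot3_sub_right, hn2, hn2]; ring⟩)
  have hderiv := ((HasDerivAt.fun_sum fun j _ => hasDerivAt_det3_of_affine p0 (hline (j - 1))
    (hline j)).const_mul (1 / 2 : ℝ)).congr_deriv hvalue
  exact ⟨hderiv, fun h => hderiv.congr_deriv (by rw [h]; ring)⟩

/-- Lemma 2.4 (vertex-star form): the derivative at `ε = 0` of the algebraic area of the
dual face, under the deformation `n_j(ε)` of the dual vertices determined by support
numbers `1 + ε·f`, equals `2·d₀·f₀ + ∑ c_j·(f_j − f₀)`.  In particular it vanishes if `f`
is a `(−2)`-eigenfunction of the discrete spherical Laplacian at the central vertex. -/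
theorem sph_dual_area_derivative
    (m : ℕ) (hm : 3 ≤ m) [NeZero m]
    (p0 : Fin 3 → ℝ) (p : ZMod m → Fin 3 → ℝ)
    (hp0 : norm3 p0 = 1) (hp : ∀ j, norm3 (p j) = 1)
    (hdet : ∀ j : ZMod m, 0 < det3 p0 (p j) (p (j+1)))
    (f0 : ℝ) (f : ZMod m → ℝ)
    (n : ZMod m → ℝ → Fin 3 → ℝ)
    (hn0 : ∀ (j : ZMod m) (ε : ℝ), dot3 p0 (n j ε) = 1 + ε * f0)
    (hn1 : ∀ (j : ZMod m) (ε : ℝ), dot3 (p j) (n j ε) = 1 + ε * f j)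
    (hn2 : ∀ (j : ZMod m) (ε : ℝ), dot3 (p (j+1)) (n j ε) = 1 + ε * f (j+1)) :
    HasDerivAt (fun ε : ℝ => (1 / 2) * ∑ j : ZMod m, det3 p0 (n (j-1) ε) (n j ε))
      (2 * sphStarVertexWeight m p0 p * f0
        + ∑ j : ZMod m, sphStarWeight m p0 p j * (f j - f0)) 0
    ∧ ((∑ j : ZMod m, sphStarWeight m p0 p j * (f j - f0)
          = -2 * sphStarVertexWeight m p0 p * f0) →
        HasDerivAt (fun ε : ℝ => (1 / 2) * ∑ j : ZMod m, det3 p0 (n (j-1) ε) (n j ε))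
          0 0) :=
  sph_dual_area_derivative_general m p0 p hp0 hp hdet f0 f n hn0 hn1 hn2
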